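/- arXiv:math/0508085 — 2 statements merged into one kernel-verified Lean document; each statement's English description precedes it below -/
import Mathlib

section
/- Selberg's inequality: If x, y_1, ..., y_n are vectors in an inner product space (H, ⟨·,·⟩) over the real or complex field with y_i ≠ 0 for each i ∈ {1, ..., n}, then ∑_{i=1}^n |⟨x, y_i⟩|² / ( ∑_{j=1}^n |⟨y_i, y_j⟩| ) ≤ ‖x‖². -/
/-!
Put `D i = ∑ j |⟪y i, y j⟫|` and `s = ∑ i (conj ⟪x, y i⟫ / D i) • y i`. Then `re ⟪x, s⟫` is the sum
`S` on the left-hand side, while the Schur test `‖∑ i, c i • y i‖² ≤ ∑ i, |c i|² D i` (from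
`2 |c i| |c j| ≤ |c i|² + |c j|²` and the symmetry of `|⟪y i, y j⟫|`) gives `‖s‖² ≤ S`;
expanding `0 ≤ ‖x - s‖²` yields `S ≤ ‖x‖²`.
-/

open Finset RCLike ComplexConjugate

theorem Finset.sum_sum_mul_mul_le_sum_sq_mul_sum {ι R : Type*} [Field R] [LinearOrder R]
    [IsStrictOrderedRing R] (s : Finset ι) {m : ι → ι → R} (hm : ∀ i j, 0 ≤ m i j)
    (hm_symm : ∀ i j, m i j = m j i) (u : ι → R) :
    ∑ i ∈ s, ∑ j ∈ s, u i * u j * m i j ≤ ∑ i ∈ s, u i ^ 2 * ∑ j ∈ s, m i j := by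
  have hswap : ∑ i ∈ s, ∑ j ∈ s, u j ^ 2 * m i j = ∑ i ∈ s, ∑ j ∈ s, u i ^ 2 * m i j := by
    rw [sum_comm]
    simp only [hm_symm]
  calc ∑ i ∈ s, ∑ j ∈ s, u i * u j * m i j
      ≤ ∑ i ∈ s, ∑ j ∈ s, (u i ^ 2 + u j ^ 2) / 2 * m i j := by
        gcongr with i _ j _
        · exact hm i j
        · linarith [two_mul_le_add_sq (u i) (u j)]
    _ = (∑ i ∈ s, ∑ j ∈ s, u i ^ 2 * m i j + ∑ i ∈ s, ∑ j ∈ s, u j ^ 2 * m i j) / 2 := by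
        simp only [← sum_add_distrib, sum_div]
        congr! 2; ring
    _ = ∑ i ∈ s, u i ^ 2 * ∑ j ∈ s, m i j := by
        rw [hswap, add_self_div_two]
        simp only [mul_sum]

section InnerProductSpace

variable {𝕜 H ι : Type*} [RCLike 𝕜] [NormedAddCommGroup H] [InnerProductSpace 𝕜 H] [Fintype ι]

theorem inner_sum_smul_sum_smul (c : ι → 𝕜) (y : ι → H) :
    (inner 𝕜 (∑ i, c i • y i) (∑ j, c j • y j) : 𝕜) =
      ∑ i, ∑ j, conj (c i) * c j * inner 𝕜 (y i) (y j) := by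
  simp_rw [sum_inner, inner_sum, inner_smul_left, inner_smul_right, mul_assoc]

theorem norm_sum_smul_sq_le (c : ι → 𝕜) (y : ι → H) :
    ‖∑ i, c i • y i‖ ^ 2 ≤ ∑ i, ‖c i‖ ^ 2 * ∑ j, ‖(inner 𝕜 (y i) (y j) : 𝕜)‖ := by
  calc ‖∑ i, c i • y i‖ ^ 2 = ‖(inner 𝕜 (∑ i, c i • y i) (∑ j, c j • y j) : 𝕜)‖ := by
        rw [inner_self_eq_norm_sq_to_K, norm_pow, norm_ofReal, abs_norm]
    _ ≤ ∑ i, ∑ j, ‖c i‖ * ‖c j‖ * ‖(inner 𝕜 (y i) (y j) : 𝕜)‖ := by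
        rw [inner_sum_smul_sum_smul]
        refine (norm_sum_le _ _).trans (sum_le_sum fun i _ => ?_)
        refine (norm_sum_le _ _).trans_eq (sum_congr rfl fun j _ => ?_)
        rw [norm_mul, norm_mul, norm_conj]
    _ ≤ _ := sum_sum_mul_mul_le_sum_sq_mul_sum _ (fun _ _ => norm_nonneg _)
        (fun _ _ => norm_inner_symm _ _) _

variable (𝕜) in
theorem two_mul_re_inner_sub_norm_sq_le (x s : H) :
    2 * re (inner 𝕜 x s : 𝕜) - ‖s‖ ^ 2 ≤ ‖x‖ ^ 2 := by
  linarith [norm_sub_sq (𝕜 := 𝕜) x s, sq_nonneg ‖x - s‖]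

end InnerProductSpace

theorem div_sq_mul_self {K : Type*} [Field K] (a d : K) : (a / d) ^ 2 * d = a ^ 2 / d := by
  rcases eq_or_ne d 0 with rfl | hd
  · simp
  · field_simp

theorem selberg_inequality_general {𝕜 H : Type*} [RCLike 𝕜] [NormedAddCommGroup H]
    [InnerProductSpace 𝕜 H] {n : ℕ} (x : H) (y : Fin n → H) :
    ∑ i, ‖(inner 𝕜 x (y i) : 𝕜)‖ ^ 2 / (∑ j, ‖(inner 𝕜 (y i) (y j) : 𝕜)‖) ≤ ‖x‖ ^ 2 := by
  set a : Fin n → 𝕜 := fun i => inner 𝕜 x (y i)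
  set D : Fin n → ℝ := fun i => ∑ j, ‖(inner 𝕜 (y i) (y j) : 𝕜)‖
  set c : Fin n → 𝕜 := fun i => conj (a i) / (D i : 𝕜)
  have hre : re (inner 𝕜 x (∑ i, c i • y i) : 𝕜) = ∑ i, ‖a i‖ ^ 2 / D i := by
    simp only [inner_sum, inner_smul_right, map_sum]
    refine sum_congr rfl fun i _ => ?_
    rw [show c i * a i = ((‖a i‖ ^ 2 / D i : ℝ) : 𝕜) by
      simp only [c, div_mul_eq_mul_div, RCLike.conj_mul]; push_cast; rfl, ofReal_re]
  have hD : ∀ i, 0 ≤ D i := fun i => sum_nonneg fun j _ => norm_nonneg _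
  have hnorm : ‖∑ i, c i • y i‖ ^ 2 ≤ ∑ i, ‖a i‖ ^ 2 / D i := by
    refine (norm_sum_smul_sq_le c y).trans_eq (sum_congr rfl fun i _ => ?_)
    rw [norm_div, norm_conj, norm_ofReal, abs_of_nonneg (hD i)]
    exact div_sq_mul_self _ _
  linarith [two_mul_re_inner_sub_norm_sq_le 𝕜 x (∑ i, c i • y i)]

/-- Selberg's inequality. -/
theorem selberg_inequality {𝕜 H : Type*} [RCLike 𝕜] [NormedAddCommGroup H]
    [InnerProductSpace 𝕜 H] {n : ℕ} (hn : 0 < n) (x : H) (y : Fin n → H)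
    (hy : ∀ i, y i ≠ 0) :
    ∑ i, ‖(inner 𝕜 x (y i) : 𝕜)‖ ^ 2 / (∑ j, ‖(inner 𝕜 (y i) (y j) : 𝕜)‖) ≤ ‖x‖ ^ 2 :=
  selberg_inequality_general x y
end

section
/- Dragomir's Boas–Bellman type inequality: For any vectors x, y_1, ..., y_n in an inner product space (H, ⟨·,·⟩) over the real or complex field, one has ∑_{i=1}^n |⟨x, y_i⟩|² ≤ ‖x‖² [ max_{1≤i≤n} ‖y_i‖² + (n−1) · max_{1≤i≠j≤n} |⟨y_i, y_j⟩| ]. -/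
/-!
Put `a i = ⟪x, y i⟫` and `z = ∑ i, conj (a i) • y i`, so that `⟪x, z⟫ = S := ∑ i, ‖a i‖ ^ 2`.
Cauchy–Schwarz gives `S ^ 2 ≤ ‖x‖ ^ 2 * ‖z‖ ^ 2`, while expanding `‖z‖ ^ 2` through the Gram
matrix of the `y i` and bounding its diagonal by `M` and its off-diagonal entries by `m` gives
`‖z‖ ^ 2 ≤ (M - m) * S + m * (∑ i, ‖a i‖) ^ 2 ≤ (M + (n - 1) * m) * S`,
the last step being Cauchy–Schwarz in `ℝⁿ`. Dividing by `S` yields the inequality.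
-/

open Finset

lemma sum_sum_mul_mul_le_of_diag_offDiag_le {ι : Type*} [Fintype ι] (b : ι → ℝ) (hb : 0 ≤ b)
    (G : ι → ι → ℝ) {M m : ℝ} (hM : ∀ i, G i i ≤ M) (hm : ∀ i j, i ≠ j → G i j ≤ m)
    (hm0 : 0 ≤ m) :
    ∑ i, ∑ j, b i * b j * G i j ≤ (M + (Fintype.card ι - 1) * m) * ∑ i, b i ^ 2 := by
  classical
  have hG : ∀ i j, G i j ≤ m + if i = j then M - m else 0 := by
    intro i j
    split_ifs with hij
    · subst hij; linarith [hM i]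
    · linarith [hm i j hij]
  have hCS : (∑ i, b i) ^ 2 ≤ Fintype.card ι * ∑ i, b i ^ 2 := sq_sum_le_card_mul_sum_sq
  calc ∑ i, ∑ j, b i * b j * G i j
      ≤ ∑ i, ∑ j, b i * b j * (m + if i = j then M - m else 0) := by
        gcongr with i _ j _
        · exact mul_nonneg (hb i) (hb j)
        · exact hG i j
    _ = m * (∑ i, b i) ^ 2 + (M - m) * ∑ i, b i ^ 2 := by
        simp only [mul_add, sum_add_distrib, mul_ite, mul_zero, sum_ite_eq, mem_univ, if_true]
        rw [sq, sum_mul_sum, mul_sum, mul_sum]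
        congr 1
        · exact sum_congr rfl fun i _ => by rw [mul_sum]; exact sum_congr rfl fun j _ => by ring
        · exact sum_congr rfl fun i _ => by ring
    _ ≤ (M + (Fintype.card ι - 1) * m) * ∑ i, b i ^ 2 := by
        linarith [mul_le_mul_of_nonneg_left hCS hm0]

section InnerProduct

variable {𝕜 H ι : Type*} [RCLike 𝕜] [NormedAddCommGroup H] [InnerProductSpace 𝕜 H] [Fintype ι]

lemma norm_sum_smul_sq_le_sum_sum_norm_mul_norm_inner (c : ι → 𝕜) (y : ι → H) :
    ‖∑ i, c i • y i‖ ^ 2 ≤ ∑ i, ∑ j, ‖c i‖ * ‖c j‖ * ‖(inner 𝕜 (y i) (y j) : 𝕜)‖ := by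
  have hexpand : (inner 𝕜 (∑ i, c i • y i) (∑ j, c j • y j) : 𝕜) =
      ∑ i, ∑ j, starRingEnd 𝕜 (c i) * c j * inner 𝕜 (y i) (y j) := by
    rw [sum_inner]
    refine sum_congr rfl fun i _ => ?_
    rw [inner_smul_left, inner_sum, mul_sum]
    exact sum_congr rfl fun j _ => by rw [inner_smul_right, mul_assoc]
  calc ‖∑ i, c i • y i‖ ^ 2 = RCLike.re (inner 𝕜 (∑ i, c i • y i) (∑ j, c j • y j) : 𝕜) :=
        (inner_self_eq_norm_sq _).symm
    _ ≤ ‖∑ i, ∑ j, starRingEnd 𝕜 (c i) * c j * (inner 𝕜 (y i) (y j) : 𝕜)‖ :=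
        hexpand ▸ RCLike.re_le_norm _
    _ ≤ ∑ i, ∑ j, ‖starRingEnd 𝕜 (c i) * c j * (inner 𝕜 (y i) (y j) : 𝕜)‖ :=
        (norm_sum_le _ _).trans (sum_le_sum fun i _ => norm_sum_le _ _)
    _ = ∑ i, ∑ j, ‖c i‖ * ‖c j‖ * ‖(inner 𝕜 (y i) (y j) : 𝕜)‖ := by
        simp only [norm_mul, RCLike.norm_conj]

lemma norm_sum_smul_sq_le_of_gram_le (c : ι → 𝕜) (y : ι → H) {M m : ℝ}
    (hM : ∀ i, ‖y i‖ ^ 2 ≤ M) (hm : ∀ i j, i ≠ j → ‖(inner 𝕜 (y i) (y j) : 𝕜)‖ ≤ m)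
    (hm0 : 0 ≤ m) :
    ‖∑ i, c i • y i‖ ^ 2 ≤ (M + (Fintype.card ι - 1) * m) * ∑ i, ‖c i‖ ^ 2 := by
  refine (norm_sum_smul_sq_le_sum_sum_norm_mul_norm_inner c y).trans ?_
  refine sum_sum_mul_mul_le_of_diag_offDiag_le _ (fun i => norm_nonneg _) _ (fun i => ?_) hm hm0
  rw [inner_self_eq_norm_sq_to_K, norm_pow, RCLike.norm_ofReal, abs_norm]
  exact hM i

lemma sum_norm_inner_sq_le_of_norm_sum_smul_sq_le (x : H) (y : ι → H) {K : ℝ} (hK : 0 ≤ K)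
    (hy : ∀ c : ι → 𝕜, ‖∑ i, c i • y i‖ ^ 2 ≤ K * ∑ i, ‖c i‖ ^ 2) :
    ∑ i, ‖(inner 𝕜 x (y i) : 𝕜)‖ ^ 2 ≤ ‖x‖ ^ 2 * K := by
  set S := ∑ i, ‖(inner 𝕜 x (y i) : 𝕜)‖ ^ 2 with hS_def
  set z := ∑ i, (inner 𝕜 (y i) x : 𝕜) • y i
  have hxz : (inner 𝕜 x z : 𝕜) = S := by
    rw [inner_sum, hS_def]
    push_cast
    refine sum_congr rfl fun i _ => ?_
    rw [inner_smul_right, ← inner_conj_symm (y i) x, RCLike.conj_mul]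
  have hz : ‖z‖ ^ 2 ≤ K * S := by
    simpa only [z, S, norm_inner_symm] using hy fun i => inner 𝕜 (y i) x
  have hS0 : 0 ≤ S := sum_nonneg fun i _ => sq_nonneg _
  have hCS : S ≤ ‖x‖ * ‖z‖ := by
    simpa only [hxz, RCLike.norm_ofReal, abs_of_nonneg hS0] using norm_inner_le_norm (𝕜 := 𝕜) x z
  rcases hS0.eq_or_lt with hS | hS
  · rw [← hS]; positivity
  · refine le_of_mul_le_mul_right ?_ hS
    calc S * S ≤ ‖x‖ ^ 2 * ‖z‖ ^ 2 := by nlinarith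
      _ ≤ ‖x‖ ^ 2 * (K * S) := by gcongr
      _ = ‖x‖ ^ 2 * K * S := by ring

end InnerProduct

/-- Dragomir's Boas–Bellman type inequality. -/
theorem dragomir_boas_bellman_type {𝕜 H : Type*} [RCLike 𝕜] [NormedAddCommGroup H]
    [InnerProductSpace 𝕜 H] {n : ℕ} (hn : 0 < n) (x : H) (y : Fin n → H) :
    ∑ i, ‖(inner 𝕜 x (y i) : 𝕜)‖ ^ 2 ≤
      ‖x‖ ^ 2 *
        ((Finset.univ.sup' (Finset.univ_nonempty_iff.mpr (Fin.pos_iff_nonempty.mp hn))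
            fun i => ‖y i‖ ^ 2) +
          ((n : ℝ) - 1) *
            ⨆ p : {p : Fin n × Fin n // p.1 ≠ p.2}, ‖(inner 𝕜 (y p.1.1) (y p.1.2) : 𝕜)‖) := by
  set M := Finset.univ.sup' (Finset.univ_nonempty_iff.mpr (Fin.pos_iff_nonempty.mp hn))
    fun i => ‖y i‖ ^ 2
  set m := ⨆ p : {p : Fin n × Fin n // p.1 ≠ p.2}, ‖(inner 𝕜 (y p.1.1) (y p.1.2) : 𝕜)‖
  have hM : ∀ i, ‖y i‖ ^ 2 ≤ M := fun i => le_sup' (fun i => ‖y i‖ ^ 2) (mem_univ i)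
  have hm : ∀ i j, i ≠ j → ‖(inner 𝕜 (y i) (y j) : 𝕜)‖ ≤ m := fun i j hij =>
    le_ciSup (f := fun p : {p : Fin n × Fin n // p.1 ≠ p.2} => ‖(inner 𝕜 (y p.1.1) (y p.1.2) : 𝕜)‖)
      (Set.finite_range _).bddAbove ⟨(i, j), hij⟩
  have hm0 : 0 ≤ m := Real.iSup_nonneg fun p => norm_nonneg _
  have hK : 0 ≤ M + ((n : ℝ) - 1) * m :=
    add_nonneg ((sq_nonneg _).trans (hM ⟨0, hn⟩))
      (mul_nonneg (sub_nonneg.2 (by exact_mod_cast hn)) hm0)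
  refine sum_norm_inner_sq_le_of_norm_sum_smul_sq_le x y hK fun c => ?_
  simpa only [Fintype.card_fin] using norm_sum_smul_sq_le_of_gram_le c y hM hm hm0
end
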